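/- Let γ > 0, C > 0, and 0 < k ≤ 1. Define g(x,y) := (1/4)(5x² − 4xy + y²) for x, y ∈ ℝ. There exists a constant C' > 0 depending only on γ and C (not on k) such that: for every sequence a : ℕ → ℝ satisfying g(a_{n+1}, a_n) + (γ k / 2) a_{n+1}² ≤ g(a_n, a_{n−1}) + C k² for all n ≥ 1, one has limsup_{n→∞} a_n² ≤ C' k. In particular limsup_{n→∞} |a_n| ≤ √(C') k^{1/2}. -/

import Mathlib

/-!
Along a solution, the energy `Eₙ = g(aₙ₊₁, aₙ)` loses `(γk/2)aₙ₊₁²` per step up to `Ck²`.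
Two consecutive steps dissipate both arguments of `g`, and since `g(x, y) ≤ 2(x² + y²)` this gives
`(1 + γk/4) Eₙ₊₂ ≤ Eₙ + 2Ck²`. Hence `Eₙ` contracts geometrically towards `8Ck/γ`, and
`aₙ₊₁² ≤ 8 Eₙ` turns this into `limsup aₙ² ≤ (64C/γ) k`.
-/

open Filter Topology

noncomputable def gScalar (x y : ℝ) : ℝ := (1/4) * (5 * x^2 - 4 * x * y + y^2)

lemma sq_le_eight_mul_gScalar (x y : ℝ) : x ^ 2 ≤ 8 * gScalar x y := by
  unfold gScalar; nlinarith [sq_nonneg (y - 2 * x), sq_nonneg x]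

lemma gScalar_le_two_mul_sq_add_sq (x y : ℝ) : gScalar x y ≤ 2 * (x ^ 2 + y ^ 2) := by
  unfold gScalar; nlinarith [sq_nonneg (x + y)]

lemma gScalar_two_step_dissipation {a : ℕ → ℝ} {μ c : ℝ} (hμ : 0 ≤ μ)
    (h : ∀ n, 1 ≤ n → gScalar (a (n + 1)) (a n) + μ * a (n + 1) ^ 2 ≤
      gScalar (a n) (a (n - 1)) + c) (n : ℕ) :
    (1 + μ / 2) * gScalar (a (n + 3)) (a (n + 2)) ≤ gScalar (a (n + 1)) (a n) + 2 * c := by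
  have h₁ : gScalar (a (n + 2)) (a (n + 1)) + μ * a (n + 2) ^ 2 ≤
      gScalar (a (n + 1)) (a n) + c := h (n + 1) (by omega)
  have h₂ : gScalar (a (n + 3)) (a (n + 2)) + μ * a (n + 3) ^ 2 ≤
      gScalar (a (n + 2)) (a (n + 1)) + c := h (n + 2) (by omega)
  have hg := mul_le_mul_of_nonneg_left (gScalar_le_two_mul_sq_add_sq (a (n + 3)) (a (n + 2))) hμ
  linarith

lemma le_pow_half_mul_of_two_step {v : ℕ → ℝ} {ρ : ℝ} (hρ : 0 ≤ ρ)
    (h : ∀ n, v (n + 2) ≤ ρ * v n) (n : ℕ) : v n ≤ ρ ^ (n / 2) * max (v 0) (v 1) := by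
  induction n using Nat.twoStepInduction with
  | zero => simp
  | one => simp
  | more n ih _ =>
    calc v (n + 2) ≤ ρ * (ρ ^ (n / 2) * max (v 0) (v 1)) := (h n).trans (by gcongr)
      _ = ρ ^ ((n + 2) / 2) * max (v 0) (v 1) := by
        rw [Nat.add_div_right n two_pos, pow_succ]; ring

lemma eventually_le_of_two_step {v : ℕ → ℝ} {ρ : ℝ} (hρ₀ : 0 ≤ ρ) (hρ₁ : ρ < 1)
    (h : ∀ n, v (n + 2) ≤ ρ * v n) {ε : ℝ} (hε : 0 < ε) : ∀ᶠ n in atTop, v n ≤ ε := by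
  have hlim : Tendsto (fun n : ℕ => ρ ^ (n / 2) * max (v 0) (v 1)) atTop (𝓝 0) := by
    simpa using ((tendsto_pow_atTop_nhds_zero_of_lt_one hρ₀ hρ₁).comp
      (Nat.tendsto_div_const_atTop two_ne_zero)).mul_const (max (v 0) (v 1))
  filter_upwards [hlim.eventually (ge_mem_nhds hε)] with n hn
  exact (le_pow_half_mul_of_two_step hρ₀ h n).trans hn

lemma eventually_le_add_of_two_step {u : ℕ → ℝ} {δ c : ℝ} (hδ : 0 < δ)
    (h : ∀ n, (1 + δ) * u (n + 2) ≤ u n + c) {ε : ℝ} (hε : 0 < ε) :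
    ∀ᶠ n in atTop, u n ≤ c / δ + ε := by
  have hρ : ∀ n, u (n + 2) - c / δ ≤ (1 + δ)⁻¹ * (u n - c / δ) := by
    intro n
    rw [← div_eq_inv_mul, le_div_iff₀ (by linarith)]
    field_simp
    nlinarith [mul_le_mul_of_nonneg_left (h n) hδ.le]
  filter_upwards [eventually_le_of_two_step (v := fun n => u n - c / δ) (ρ := (1 + δ)⁻¹)
    (by positivity) (inv_lt_one_of_one_lt₀ (by linarith)) hρ hε] with n hn
  linarith

lemma limsup_le_of_eventually_le_add {ι : Type*} {l : Filter ι} [l.NeBot] {f : ι → ℝ} {L : ℝ}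
    (hf : ∀ i, 0 ≤ f i) (h : ∀ ε > 0, ∀ᶠ i in l, f i ≤ L + ε) : limsup f l ≤ L :=
  le_of_forall_pos_le_add fun ε hε =>
    limsup_le_of_le (isCoboundedUnder_le_of_le l hf) (h ε hε)

lemma eventually_abs_le_sqrt_add {ι : Type*} {l : Filter ι} {f : ι → ℝ} {L : ℝ}
    (h : ∀ ε > 0, ∀ᶠ i in l, f i ^ 2 ≤ L + ε) (hL : 0 ≤ L) {ε : ℝ} (hε : 0 < ε) :
    ∀ᶠ i in l, |f i| ≤ √L + ε := by
  filter_upwards [h (ε ^ 2) (by positivity)] with i hi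
  refine abs_le_of_sq_le_sq (hi.trans ?_) (by positivity)
  nlinarith [Real.sq_sqrt hL, Real.sqrt_nonneg L]

/-- Dissipative scalar G-norm recursion: any sequence satisfying the recursion
`g(a_{n+1}, aₙ) + (γk/2) a_{n+1}² ≤ g(aₙ, a_{n−1}) + C k²` eventually satisfies
`aₙ² ≲ k`; the constant `C'` depends only on `γ` and `C`, not on `k`. -/
theorem stmt_8 (γ C : ℝ) (hγ : 0 < γ) (hC : 0 < C) :
    ∃ C' > (0:ℝ),
      ∀ k : ℝ, 0 < k → k ≤ 1 →
      ∀ a : ℕ → ℝ,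
        (∀ n, 1 ≤ n →
          gScalar (a (n+1)) (a n) + (γ * k / 2) * (a (n+1))^2 ≤
            gScalar (a n) (a (n-1)) + C * k^2) →
        Filter.limsup (fun n => (a n)^2) Filter.atTop ≤ C' * k ∧
        Filter.limsup (fun n => |a n|) Filter.atTop ≤ Real.sqrt C' * k ^ ((1:ℝ)/2) := by
  refine ⟨64 * C / γ, by positivity, fun k hk _ a ha => ?_⟩
  have hlimit : 2 * (C * k ^ 2) / (γ * k / 2 / 2) = 64 * C / γ * k / 8 := by
    field_simp; ring
  have hsq : ∀ ε > 0, ∀ᶠ n in atTop, a n ^ 2 ≤ 64 * C / γ * k + ε := by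
    intro ε hε
    have henergy := eventually_le_add_of_two_step (u := fun n => gScalar (a (n + 1)) (a n))
      (by positivity) (gScalar_two_step_dissipation (by positivity) ha) (by positivity : 0 < ε / 8)
    rw [hlimit] at henergy
    rw [← map_add_atTop_eq_nat 1, eventually_map]
    filter_upwards [henergy] with n hn
    linarith [sq_le_eight_mul_gScalar (a (n + 1)) (a n)]
  refine ⟨limsup_le_of_eventually_le_add (fun n => sq_nonneg (a n)) hsq,
    limsup_le_of_eventually_le_add (fun n => abs_nonneg (a n)) fun ε hε => ?_⟩
  rw [← Real.sqrt_eq_rpow, ← Real.sqrt_mul (by positivity)]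
  exact eventually_abs_le_sqrt_add hsq (by positivity) hε
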